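/- arXiv:2003.02583 — 8 statements merged into one kernel-verified Lean document; each statement's English description precedes it below -/
import Mathlib

section
/- Let ‖·‖ be a norm on ℝ², let c₁, c₂ ∈ ℝ², set d := ‖c₁ − c₂‖ and D := {x ∈ ℝ² : ‖x − c₁‖ ≤ d and ‖x − c₂‖ ≤ d}. If a linear functional f : ℝ² → ℝ supports D at c₁, i.e. f(x) ≤ f(c₁) for all x ∈ D, then the parallel line through c₂ supports D at c₂ from the other side, i.e. f(c₂) ≤ f(x) for all x ∈ D. -/
/-- If a linear functional `f` supports the lens `D` at `c₁` from above
(`f x ≤ f c₁` for all `x ∈ D`), then the parallel line through `c₂` supports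
`D` at `c₂` from below (`f c₂ ≤ f x` for all `x ∈ D`). -/
theorem parallel_tangent
    (nrm : (ℝ × ℝ) → ℝ)
    (h_add : ∀ x y : ℝ × ℝ, nrm (x + y) ≤ nrm x + nrm y)
    (h_smul : ∀ (a : ℝ) (x : ℝ × ℝ), nrm (a • x) = |a| * nrm x)
    (h_def : ∀ x : ℝ × ℝ, nrm x = 0 ↔ x = 0)
    (c₁ c₂ : ℝ × ℝ) (d : ℝ) (hd : d = nrm (c₁ - c₂))
    (D : Set (ℝ × ℝ))
    (hD : D = {x | nrm (x - c₁) ≤ d ∧ nrm (x - c₂) ≤ d})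
    (f : (ℝ × ℝ) →ₗ[ℝ] ℝ)
    (hsupp : ∀ x ∈ D, f x ≤ f c₁) :
    ∀ x ∈ D, f c₂ ≤ f x := by
  have hneg : ∀ v : ℝ × ℝ, nrm (-v) = nrm v := by
    intro v
    have := h_smul (-1) v
    simpa using this
  intro x hx
  rw [hD] at hx
  obtain ⟨hx1, hx2⟩ := hx
  set y : ℝ × ℝ := c₁ + c₂ - x with hy
  have hyD : y ∈ D := by
    rw [hD]
    constructor
    · have : y - c₁ = -(x - c₂) := by rw [hy]; ring
      rw [this, hneg]; exact hx2
    · have : y - c₂ = -(x - c₁) := by rw [hy]; ring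
      rw [this, hneg]; exact hx1
  have := hsupp y hyD
  have hfy : f y = f c₁ + f c₂ - f x := by
    rw [hy]; simp [map_add, map_sub]
  linarith
end

section
/- Let ‖·‖ be a norm on ℝ², let c₁ ≠ c₂ be points of ℝ², set d := ‖c₁ − c₂‖ and D := {x ∈ ℝ² : ‖x − c₁‖ ≤ d and ‖x − c₂‖ ≤ d}. Let f : ℝ² → ℝ be a nonzero linear functional with f(c₁) = f(c₂) (so the line through c₁ and c₂ is a level set of f). If x, y ∈ D both satisfy f(x) ≤ f(c₁) and f(y) ≤ f(c₁), or both satisfy f(x) ≥ f(c₁) and f(y) ≥ f(c₁), then ‖x − y‖ ≤ d. -/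
private lemma nrm_neg (nrm : (ℝ × ℝ) → ℝ)
    (h_smul : ∀ (a : ℝ) (x : ℝ × ℝ), nrm (a • x) = |a| * nrm x) (w : ℝ × ℝ) :
    nrm (-w) = nrm w := by
  have h := h_smul (-1) w
  rw [neg_one_smul] at h
  simpa using h

private lemma nrm_nonneg (nrm : (ℝ × ℝ) → ℝ)
    (h_add : ∀ x y : ℝ × ℝ, nrm (x + y) ≤ nrm x + nrm y)
    (h_smul : ∀ (a : ℝ) (x : ℝ × ℝ), nrm (a • x) = |a| * nrm x) (w : ℝ × ℝ) :
    0 ≤ nrm w := by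
  have h0 : nrm (0 : ℝ × ℝ) = 0 := by simpa using h_smul 0 0
  have h1 := h_add w (-w)
  rw [add_neg_cancel, h0, nrm_neg nrm h_smul w] at h1
  linarith

private lemma ker_span (f : (ℝ × ℝ) →ₗ[ℝ] ℝ) (hf : f ≠ 0) (c : ℝ × ℝ) (hc : c ≠ 0)
    (hfc : f c = 0) : ∀ w : ℝ × ℝ, f w = 0 → ∃ t : ℝ, w = t • c := by
  have hrep : ∀ z : ℝ × ℝ, f z = z.1 * f (1,0) + z.2 * f (0,1) := by
    intro z
    have hz : z = z.1 • ((1:ℝ),(0:ℝ)) + z.2 • ((0:ℝ),(1:ℝ)) := by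
      ext <;> simp
    calc f z = f (z.1 • ((1:ℝ),(0:ℝ)) + z.2 • ((0:ℝ),(1:ℝ))) := by rw [← hz]
    _ = z.1 * f (1,0) + z.2 * f (0,1) := by
        rw [map_add, map_smul, map_smul]; simp [smul_eq_mul]
  intro w hw
  have hab : ¬(f (1,0) = 0 ∧ f (0,1) = 0) := by
    rintro ⟨h1, h2⟩
    apply hf
    apply LinearMap.ext
    intro z
    rw [hrep z, h1, h2]
    simp
  have hc' : c.1 * f (1,0) + c.2 * f (0,1) = 0 := by rw [← hrep]; exact hfc
  have hw' : w.1 * f (1,0) + w.2 * f (0,1) = 0 := by rw [← hrep]; exact hw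
  have hdet : c.1 * w.2 = c.2 * w.1 := by
    rcases not_and_or.mp hab with hα | hβ
    · have h : (c.1 * w.2 - c.2 * w.1) * f (1,0) = 0 := by
        linear_combination w.2 * hc' - c.2 * hw'
      rcases mul_eq_zero.mp h with h | h
      · linarith [sub_eq_zero.mp h]
      · exact absurd h hα
    · have h : (c.1 * w.2 - c.2 * w.1) * f (0,1) = 0 := by
        linear_combination c.1 * hw' - w.1 * hc'
      rcases mul_eq_zero.mp h with h | h
      · linarith [sub_eq_zero.mp h]
      · exact absurd h hβ
  have hc1 : c.1 ≠ 0 ∨ c.2 ≠ 0 := by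
    by_contra h
    push_neg at h
    exact hc (Prod.ext h.1 h.2)
  rcases hc1 with h1 | h2
  · refine ⟨w.1 / c.1, ?_⟩
    have e2 : w.2 = w.1 / c.1 * c.2 := by field_simp; linarith [hdet]
    ext
    · simp [div_mul_cancel₀, h1]
    · simpa using e2
  · refine ⟨w.2 / c.2, ?_⟩
    have e1 : w.1 = w.2 / c.2 * c.1 := by field_simp; linarith [hdet]
    ext
    · simpa using e1
    · simp [div_mul_cancel₀, h2]

private lemma key (nrm : (ℝ × ℝ) → ℝ)
    (h_add : ∀ x y : ℝ × ℝ, nrm (x + y) ≤ nrm x + nrm y)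
    (h_smul : ∀ (a : ℝ) (x : ℝ × ℝ), nrm (a • x) = |a| * nrm x)
    (c : ℝ × ℝ) (d : ℝ) (hd : nrm c = d) (hdpos : 0 < d)
    (f : (ℝ × ℝ) →ₗ[ℝ] ℝ)
    (hker : ∀ w : ℝ × ℝ, f w = 0 → ∃ t : ℝ, w = t • c)
    (u v : ℝ × ℝ)
    (hu1 : nrm u ≤ d) (hu2 : nrm (u - c) ≤ d)
    (hv1 : nrm v ≤ d) (hv2 : nrm (v - c) ≤ d)
    (huv : f u ≤ f v) (hv0 : f v ≤ 0) :
    nrm (u - v) ≤ d := by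
  have hneg := nrm_neg nrm h_smul
  have tri : ∀ (a b : ℝ) (p q : ℝ × ℝ), 0 ≤ a → 0 ≤ b → nrm p ≤ d → nrm q ≤ d →
      nrm (a • p + b • q) ≤ (a + b) * d := by
    intro a b p q ha hb hp hq
    have h1 := h_add (a • p) (b • q)
    rw [h_smul a p, h_smul b q, abs_of_nonneg ha, abs_of_nonneg hb] at h1
    nlinarith [nrm_nonneg nrm h_add h_smul p, nrm_nonneg nrm h_add h_smul q]
  by_cases hu : f u = 0
  · -- both on the line: u = s•c, v = t•c with s,t ∈ [0,1]
    have hv : f v = 0 := le_antisymm hv0 (hu ▸ huv)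
    obtain ⟨s, hs⟩ := hker u hu
    obtain ⟨t, ht⟩ := hker v hv
    have hsd : |s| * d ≤ d := by
      have e : nrm u = |s| * d := by rw [hs, h_smul, hd]
      linarith [e ▸ hu1]
    have hsd' : |s - 1| * d ≤ d := by
      have e0 : (s - 1) • c = u - c := by rw [hs]; module
      have e : nrm (u - c) = |s - 1| * d := by rw [← e0, h_smul, hd]
      linarith [e ▸ hu2]
    have htd : |t| * d ≤ d := by
      have e : nrm v = |t| * d := by rw [ht, h_smul, hd]
      linarith [e ▸ hv1]
    have htd' : |t - 1| * d ≤ d := by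
      have e0 : (t - 1) • c = v - c := by rw [ht]; module
      have e : nrm (v - c) = |t - 1| * d := by rw [← e0, h_smul, hd]
      linarith [e ▸ hv2]
    have hs1 : |s| ≤ 1 := by nlinarith
    have hs2 : |s - 1| ≤ 1 := by nlinarith
    have ht1 : |t| ≤ 1 := by nlinarith
    have ht2 : |t - 1| ≤ 1 := by nlinarith
    have hst : |s - t| ≤ 1 := by
      rw [abs_le] at *
      constructor <;> linarith
    have : u - v = (s - t) • c := by rw [hs, ht]; module
    rw [this, h_smul, hd]
    nlinarith
  · have hu0 : f u < 0 := lt_of_le_of_ne (le_trans huv hv0) hu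
    set l : ℝ := f v / f u with hl
    have hlmul : l * f u = f v := div_mul_cancel₀ _ hu
    have hl0 : 0 ≤ l := by
      by_contra h
      push_neg at h
      nlinarith
    have hl1 : l ≤ 1 := by nlinarith
    obtain ⟨m, hm⟩ := hker (v - l • u) (by
      rw [map_sub, map_smul, smul_eq_mul, hlmul, sub_self])
    have hv' : v = l • u + m • c := by
      have := sub_eq_iff_eq_add.mp hm
      rw [this]; module
    have hcu : nrm (c - u) ≤ d := by
      rw [show c - u = -(u - c) by abel, hneg]; exact hu2
    have hcv : nrm (c - v) ≤ d := by
      rw [show c - v = -(v - c) by abel, hneg]; exact hv2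
    by_cases hm1 : 1 < m
    · exfalso
      have id1 : (l + m) • c = l • (c - u) + (1 : ℝ) • v := by rw [hv']; module
      have h1 : nrm ((l + m) • c) ≤ (l + 1) * d := by
        rw [id1]; exact tri l 1 _ _ hl0 zero_le_one hcu hv1
      rw [h_smul, hd, abs_of_nonneg (by linarith)] at h1
      nlinarith
    · push_neg at hm1
      by_cases hm2 : m < -l
      · exfalso
        have id2 : (1 - m) • c = l • u + (1 : ℝ) • (c - v) := by rw [hv']; module
        have h1 : nrm ((1 - m) • c) ≤ (l + 1) * d := by
          rw [id2]; exact tri l 1 _ _ hl0 zero_le_one hu1 hcv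
        rw [h_smul, hd, abs_of_nonneg (by linarith)] at h1
        nlinarith
      · push_neg at hm2
        by_cases hm0 : m ≤ 0
        · have id3 : u - v = (1 - l) • u + (-m) • c := by rw [hv']; module
          have h1 : nrm (u - v) ≤ ((1 - l) + (-m)) * d := by
            rw [id3]; exact tri _ _ _ _ (by linarith) (by linarith) hu1 hd.le
          nlinarith
        · push_neg at hm0
          by_cases hm3 : m ≤ 1 - l
          · have id4 : u - v = (1 - l - m) • u + m • (u - c) := by rw [hv']; module
            have h1 : nrm (u - v) ≤ ((1 - l - m) + m) * d := by
              rw [id4]; exact tri _ _ _ _ (by linarith) (by linarith) hu1 hu2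
            nlinarith
          · push_neg at hm3
            have id5 : u - v = (1 - l) • (u - c) + (m - (1 - l)) • (-c) := by
              rw [hv']; module
            have h1 : nrm (u - v) ≤ ((1 - l) + (m - (1 - l))) * d := by
              rw [id5]
              exact tri _ _ _ _ (by linarith) (by linarith) hu2 (by rw [hneg, hd])
            nlinarith

private lemma key2 (nrm : (ℝ × ℝ) → ℝ)
    (h_add : ∀ x y : ℝ × ℝ, nrm (x + y) ≤ nrm x + nrm y)
    (h_smul : ∀ (a : ℝ) (x : ℝ × ℝ), nrm (a • x) = |a| * nrm x)
    (c : ℝ × ℝ) (d : ℝ) (hd : nrm c = d) (hdpos : 0 < d)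
    (f : (ℝ × ℝ) →ₗ[ℝ] ℝ)
    (hker : ∀ w : ℝ × ℝ, f w = 0 → ∃ t : ℝ, w = t • c)
    (u v : ℝ × ℝ)
    (hu1 : nrm u ≤ d) (hu2 : nrm (u - c) ≤ d)
    (hv1 : nrm v ≤ d) (hv2 : nrm (v - c) ≤ d)
    (hu0 : f u ≤ 0) (hv0 : f v ≤ 0) :
    nrm (u - v) ≤ d := by
  rcases le_total (f u) (f v) with h | h
  · exact key nrm h_add h_smul c d hd hdpos f hker u v hu1 hu2 hv1 hv2 h hv0
  · have h1 := key nrm h_add h_smul c d hd hdpos f hker v u hv1 hv2 hu1 hu2 h hu0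
    rw [show u - v = -(v - u) by abel, nrm_neg nrm h_smul]
    exact h1

/-- Cutting the lens `D` along the line through `c₁` and `c₂` (a level set of a
nonzero linear functional `f` with `f c₁ = f c₂`): any two points of `D` on the
same side of this line are at norm-distance at most `d = ‖c₁ - c₂‖`. -/
theorem half_lens_diameter
    (nrm : (ℝ × ℝ) → ℝ)
    (h_add : ∀ x y : ℝ × ℝ, nrm (x + y) ≤ nrm x + nrm y)
    (h_smul : ∀ (a : ℝ) (x : ℝ × ℝ), nrm (a • x) = |a| * nrm x)
    (h_def : ∀ x : ℝ × ℝ, nrm x = 0 ↔ x = 0)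
    (c₁ c₂ : ℝ × ℝ) (hne : c₁ ≠ c₂) (d : ℝ) (hd : d = nrm (c₁ - c₂))
    (D : Set (ℝ × ℝ))
    (hD : D = {x | nrm (x - c₁) ≤ d ∧ nrm (x - c₂) ≤ d})
    (f : (ℝ × ℝ) →ₗ[ℝ] ℝ) (hf : f ≠ 0) (hlevel : f c₁ = f c₂)
    (x y : ℝ × ℝ) (hx : x ∈ D) (hy : y ∈ D)
    (hside : (f x ≤ f c₁ ∧ f y ≤ f c₁) ∨ (f c₁ ≤ f x ∧ f c₁ ≤ f y)) :
    nrm (x - y) ≤ d := by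
  rw [hD] at hx hy
  obtain ⟨hx1, hx2⟩ := hx
  obtain ⟨hy1, hy2⟩ := hy
  set c : ℝ × ℝ := c₂ - c₁ with hc
  have hc0 : c ≠ 0 := sub_ne_zero.mpr (Ne.symm hne)
  have hdc : nrm c = d := by
    rw [hd, show c = -(c₁ - c₂) by rw [hc]; abel, nrm_neg nrm h_smul]
  have hdpos : 0 < d := by
    have h1 := nrm_nonneg nrm h_add h_smul (c₁ - c₂)
    have h2 : nrm (c₁ - c₂) ≠ 0 := fun h => hne (sub_eq_zero.mp ((h_def _).mp h))
    rw [hd]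
    exact lt_of_le_of_ne h1 (Ne.symm h2)
  have hfc : f c = 0 := by rw [hc, map_sub, hlevel, sub_self]
  have hker := ker_span f hf c hc0 hfc
  set u : ℝ × ℝ := x - c₁ with huu
  set v : ℝ × ℝ := y - c₁ with hvv
  have huc : u - c = x - c₂ := by rw [huu, hc]; abel
  have hvc : v - c = y - c₂ := by rw [hvv, hc]; abel
  have hgoal : x - y = u - v := by rw [huu, hvv]; abel
  rw [hgoal]
  rcases hside with ⟨hs1, hs2⟩ | ⟨hs1, hs2⟩
  · refine key2 nrm h_add h_smul c d hdc hdpos f hker u v hx1 (huc ▸ hx2) hy1 (hvc ▸ hy2) ?_ ?_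
    · rw [huu, map_sub]; linarith
    · rw [hvv, map_sub]; linarith
  · refine key2 nrm h_add h_smul c d hdc hdpos (-f)
      (fun w hw => hker w (by simpa using hw)) u v hx1 (huc ▸ hx2) hy1 (hvc ▸ hy2) ?_ ?_
    · rw [LinearMap.neg_apply, huu, map_sub]; linarith
    · rw [LinearMap.neg_apply, hvv, map_sub]; linarith
end

section
/- Let ‖·‖ be a norm on ℝ², let c₁, c₂ ∈ ℝ², set d := ‖c₁ − c₂‖ and D := {x ∈ ℝ² : ‖x − c₁‖ ≤ d and ‖x − c₂‖ ≤ d}. Then D can be written as the union of two sets D₁ and D₂ such that any two points of D₁ are at distance at most d and any two points of D₂ are at distance at most d (in the norm ‖·‖). -/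
/-!
Cut `D` along the line through `c₁` and `c₂` into its two closed halves, and take `x`, `y` in the
same half with `y` no farther from the line than `x`. If the segments `[x, c₁]` and `[y, c₂]` cross
at some `z` (or `[x, c₂]` and `[y, c₁]` do), the triangle inequality through `z` gives
`‖x - y‖ + ‖c₁ - c₂‖ ≤ ‖x - c₁‖ + ‖y - c₂‖ ≤ 2d`. Otherwise `y` lies in the triangle `x c₁ c₂`,
which is contained in the convex ball of radius `d` about `x`.
-/

open Set

namespace Seminorm

variable {E : Type*} [AddCommGroup E] [Module ℝ E] (p : Seminorm ℝ E)

lemma apply_sub_add_apply_sub_of_mem_segment {x y z : E} (hz : z ∈ segment ℝ x y) :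
    p (x - z) + p (z - y) = p (x - y) := by
  obtain ⟨a, b, ha, hb, hab, rfl⟩ := hz
  obtain rfl : b = 1 - a := eq_sub_of_add_eq' hab
  have hxz : x - (a • x + (1 - a) • y) = (1 - a) • (x - y) := by module
  have hzy : a • x + (1 - a) • y - y = a • (x - y) := by module
  rw [hxz, hzy, map_smul_eq_mul, map_smul_eq_mul, Real.norm_of_nonneg ha,
    Real.norm_of_nonneg hb, ← add_mul, sub_add_cancel, one_mul]

lemma apply_sub_add_apply_sub_le_of_mem_segment {a b x y z : E} (hxa : z ∈ segment ℝ x a)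
    (hyb : z ∈ segment ℝ y b) : p (x - y) + p (a - b) ≤ p (x - a) + p (y - b) := by
  have hxy := map_add_le_add p (x - z) (z - y)
  have hab := map_add_le_add p (a - z) (z - b)
  rw [sub_add_sub_cancel, map_sub_rev p z y] at hxy
  rw [sub_add_sub_cancel, map_sub_rev p a z] at hab
  rw [← p.apply_sub_add_apply_sub_of_mem_segment hxa,
    ← p.apply_sub_add_apply_sub_of_mem_segment hyb]
  linarith

lemma apply_sub_le_of_mem_convexHull {a b x y : E} {r : ℝ} (hy : y ∈ convexHull ℝ {x, a, b})
    (ha : p (x - a) ≤ r) (hb : p (x - b) ≤ r) (hr : 0 ≤ r) : p (x - y) ≤ r := by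
  have hsub : {x, a, b} ⊆ p.closedBall x r := by
    simp only [insert_subset_iff, singleton_subset_iff, mem_closedBall, sub_self, map_zero]
    exact ⟨hr, by rwa [map_sub_rev], by rwa [map_sub_rev]⟩
  rw [map_sub_rev, ← mem_closedBall]
  exact convexHull_min hsub (p.convex_closedBall x r) hy

end Seminorm

def halfPlane {E : Type*} [AddCommGroup E] [Module ℝ E] (o u v : E) : Set E :=
  {x | ∃ α s : ℝ, 0 ≤ s ∧ x = o + α • u + s • v}

section Lens

variable {E : Type*} [AddCommGroup E] [Module ℝ E] {c₁ c₂ v x y : E} {α β s t : ℝ}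

lemma segment_inter_segment_nonempty_of_mul_le (hx : x = c₁ + α • (c₂ - c₁) + s • v)
    (hy : y = c₁ + β • (c₂ - c₁) + t • v) (ht : 0 ≤ t) (hts : t ≤ s) (hs : 0 < s)
    (h : β * s ≤ α * t) :
    (segment ℝ x c₁ ∩ segment ℝ y c₂).Nonempty := by
  set δ := α * t - β * s + s
  have hδ : 0 < δ := by linarith
  refine ⟨c₁ + (t / δ) • (α • (c₂ - c₁) + s • v),
    ⟨t / δ, 1 - t / δ, by positivity, ?_, by ring, ?_⟩,
    ⟨s / δ, 1 - s / δ, by positivity, ?_, by ring, ?_⟩⟩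
  · rw [sub_nonneg, div_le_one hδ]; linarith
  · rw [hx]
    match_scalars <;> field_simp
    ring
  · rw [sub_nonneg, div_le_one hδ]; linarith
  · rw [hy]
    match_scalars <;> field_simp <;> ring

lemma mem_convexHull_of_lt (hx : x = c₁ + α • (c₂ - c₁) + s • v)
    (hy : y = c₁ + β • (c₂ - c₁) + t • v) (ht : 0 ≤ t) (h₁ : α * t < β * s)
    (h₂ : (β - 1) * s < (α - 1) * t) :
    y ∈ convexHull ℝ {x, c₁, c₂} := by
  have hts : 0 < s - t := by linarith
  have hs : 0 < s := by linarith
  set a := (β * s - α * t) / (s - t) with ha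
  rw [convexHull_insert (insert_nonempty _ _), convexHull_pair, convexJoin_singleton_left,
    mem_iUnion₂]
  refine ⟨c₁ + a • (c₂ - c₁), ⟨1 - a, a, ?_, ?_, by ring, by module⟩,
    ⟨t / s, 1 - t / s, by positivity, ?_, by ring, ?_⟩⟩
  · rw [sub_nonneg, ha, div_le_one hts]; linarith
  · exact div_nonneg (by linarith) hts.le
  · rw [sub_nonneg, div_le_one hs]; linarith
  · rw [hx, hy, ha]
    match_scalars <;> field_simp <;> ring

lemma Seminorm.apply_sub_le_of_collinear (p : Seminorm ℝ E) (hx : x = c₁ + α • (c₂ - c₁))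
    (hy : y = c₁ + β • (c₂ - c₁)) (hx₁ : p (x - c₁) ≤ p (c₁ - c₂)) (hx₂ : p (x - c₂) ≤ p (c₁ - c₂))
    (hy₁ : p (y - c₁) ≤ p (c₁ - c₂)) (hy₂ : p (y - c₂) ≤ p (c₁ - c₂)) :
    p (x - y) ≤ p (c₁ - c₂) := by
  have hp (a : ℝ) (z : E) (hz : z = a • (c₂ - c₁)) : p z = |a| * p (c₁ - c₂) := by
    rw [hz, map_smul_eq_mul, Real.norm_eq_abs, map_sub_rev]
  rw [hp α _ (by rw [hx]; module)] at hx₁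
  rw [hp (α - 1) _ (by rw [hx]; module)] at hx₂
  rw [hp β _ (by rw [hy]; module)] at hy₁
  rw [hp (β - 1) _ (by rw [hy]; module)] at hy₂
  rw [hp (α - β) _ (by rw [hx, hy]; module)]
  rcases (apply_nonneg p (c₁ - c₂)).eq_or_lt with hr | hr
  · rw [← hr, mul_zero]
  rw [mul_le_iff_le_one_left hr, abs_le] at hx₁ hx₂ hy₁ hy₂ ⊢
  constructor <;> linarith

lemma Seminorm.apply_sub_le_of_mem_halfPlane (p : Seminorm ℝ E)
    (hx : x ∈ halfPlane c₁ (c₂ - c₁) v) (hy : y ∈ halfPlane c₁ (c₂ - c₁) v)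
    (hx₁ : p (x - c₁) ≤ p (c₁ - c₂)) (hx₂ : p (x - c₂) ≤ p (c₁ - c₂))
    (hy₁ : p (y - c₁) ≤ p (c₁ - c₂)) (hy₂ : p (y - c₂) ≤ p (c₁ - c₂)) :
    p (x - y) ≤ p (c₁ - c₂) := by
  obtain ⟨α, s, hs, hx⟩ := hx
  obtain ⟨β, t, ht, hy⟩ := hy
  wlog hts : t ≤ s generalizing x y α β s t
  · rw [map_sub_rev]
    exact this hy₁ hy₂ hx₁ hx₂ β t ht hy α s hs hx (le_of_not_ge hts)
  rcases hs.eq_or_lt with rfl | hs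
  · obtain rfl : t = 0 := le_antisymm hts ht
    rw [zero_smul, add_zero] at hx hy
    exact p.apply_sub_le_of_collinear hx hy hx₁ hx₂ hy₁ hy₂
  rcases le_or_gt (β * s) (α * t) with h₁ | h₁
  · obtain ⟨z, hzx, hzy⟩ := segment_inter_segment_nonempty_of_mul_le hx hy ht hts hs h₁
    linarith [p.apply_sub_add_apply_sub_le_of_mem_segment hzx hzy]
  rcases le_or_gt ((α - 1) * t) ((β - 1) * s) with h₂ | h₂
  · have hx' : x = c₂ + (1 - α) • (c₁ - c₂) + s • v := by rw [hx]; module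
    have hy' : y = c₂ + (1 - β) • (c₁ - c₂) + t • v := by rw [hy]; module
    obtain ⟨z, hzx, hzy⟩ := segment_inter_segment_nonempty_of_mul_le hx' hy' ht hts hs (by linarith)
    linarith [p.apply_sub_add_apply_sub_le_of_mem_segment hzx hzy, map_sub_rev p c₁ c₂]
  · exact p.apply_sub_le_of_mem_convexHull (mem_convexHull_of_lt hx hy ht h₁ h₂) hx₁ hx₂
      (apply_nonneg _ _)

end Lens

lemma halfPlane_union_halfPlane_neg (o : ℝ × ℝ) {u : ℝ × ℝ} (hu : u ≠ 0) :
    halfPlane o u (-u.2, u.1) ∪ halfPlane o u (-(-u.2, u.1)) = univ := by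
  have hn : 0 < u.1 ^ 2 + u.2 ^ 2 := by
    by_contra! h
    exact hu (Prod.ext (by simp only [Prod.fst_zero]; nlinarith [sq_nonneg u.2])
      (by simp only [Prod.snd_zero]; nlinarith [sq_nonneg u.1]))
  refine eq_univ_of_forall fun z ↦ ?_
  set s := ((z - o).2 * u.1 - (z - o).1 * u.2) / (u.1 ^ 2 + u.2 ^ 2)
  have hz : z = o + (((z - o).1 * u.1 + (z - o).2 * u.2) / (u.1 ^ 2 + u.2 ^ 2)) • u
      + s • ((-u.2, u.1) : ℝ × ℝ) := by
    ext <;> simp only [Prod.fst_add, Prod.snd_add, Prod.fst_sub, Prod.snd_sub, Prod.smul_fst,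
      Prod.smul_snd, Prod.smul_mk, smul_eq_mul, mul_neg, s] <;> field_simp <;> ring
  rcases le_total 0 s with hs | hs
  · exact Or.inl ⟨_, s, hs, hz⟩
  · exact Or.inr ⟨_, -s, neg_nonneg.mpr hs, by rwa [neg_smul_neg]⟩

theorem lens_union_two_small_diameter_sets_general
    (nrm : (ℝ × ℝ) → ℝ)
    (h_add : ∀ x y : ℝ × ℝ, nrm (x + y) ≤ nrm x + nrm y)
    (h_smul : ∀ (a : ℝ) (x : ℝ × ℝ), nrm (a • x) = |a| * nrm x)
    (c₁ c₂ : ℝ × ℝ) (d : ℝ) (hd : d = nrm (c₁ - c₂))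
    (D : Set (ℝ × ℝ))
    (hD : D = {x | nrm (x - c₁) ≤ d ∧ nrm (x - c₂) ≤ d}) :
    ∃ D₁ D₂ : Set (ℝ × ℝ), D = D₁ ∪ D₂ ∧
      (∀ x ∈ D₁, ∀ y ∈ D₁, nrm (x - y) ≤ d) ∧
      (∀ x ∈ D₂, ∀ y ∈ D₂, nrm (x - y) ≤ d) := by
  let p : Seminorm ℝ (ℝ × ℝ) := .of nrm h_add fun a x ↦ by rw [Real.norm_eq_abs, h_smul]
  change d = p (c₁ - c₂) at hd
  subst hd
  have hmem : ∀ x ∈ D, p (x - c₁) ≤ p (c₁ - c₂) ∧ p (x - c₂) ≤ p (c₁ - c₂) := by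
    rw [hD]; exact fun x hx ↦ hx
  by_cases hc : c₁ = c₂
  · subst hc
    have hdiam : ∀ x ∈ D, ∀ y ∈ D, p (x - y) ≤ p (c₁ - c₁) := fun x hx y hy ↦ by
      have := map_sub_le_add p (x - c₁) (y - c₁)
      rw [sub_sub_sub_cancel_right] at this
      linarith [(hmem x hx).1, (hmem y hy).1, show p (c₁ - c₁) = 0 by simp]
    exact ⟨D, D, (union_self D).symm, hdiam, hdiam⟩
  have hdiam (w : ℝ × ℝ) : ∀ x ∈ D ∩ halfPlane c₁ (c₂ - c₁) w,
      ∀ y ∈ D ∩ halfPlane c₁ (c₂ - c₁) w, p (x - y) ≤ p (c₁ - c₂) := by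
    rintro x ⟨hxD, hx⟩ y ⟨hyD, hy⟩
    exact p.apply_sub_le_of_mem_halfPlane hx hy (hmem x hxD).1 (hmem x hxD).2
      (hmem y hyD).1 (hmem y hyD).2
  let v : ℝ × ℝ := (-(c₂ - c₁).2, (c₂ - c₁).1)
  refine ⟨_, _, ?_, hdiam v, hdiam (-v)⟩
  rw [← inter_union_distrib_left, halfPlane_union_halfPlane_neg c₁ (sub_ne_zero.mpr (Ne.symm hc)),
    inter_univ]

/-- The lens `D` is the union of two sets each of norm-diameter at most
`d = ‖c₁ - c₂‖`. -/
theorem lens_union_two_small_diameter_sets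
    (nrm : (ℝ × ℝ) → ℝ)
    (h_add : ∀ x y : ℝ × ℝ, nrm (x + y) ≤ nrm x + nrm y)
    (h_smul : ∀ (a : ℝ) (x : ℝ × ℝ), nrm (a • x) = |a| * nrm x)
    (h_def : ∀ x : ℝ × ℝ, nrm x = 0 ↔ x = 0)
    (c₁ c₂ : ℝ × ℝ) (d : ℝ) (hd : d = nrm (c₁ - c₂))
    (D : Set (ℝ × ℝ))
    (hD : D = {x | nrm (x - c₁) ≤ d ∧ nrm (x - c₂) ≤ d}) :
    ∃ D₁ D₂ : Set (ℝ × ℝ), D = D₁ ∪ D₂ ∧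
      (∀ x ∈ D₁, ∀ y ∈ D₁, nrm (x - y) ≤ d) ∧
      (∀ x ∈ D₂, ∀ y ∈ D₂, nrm (x - y) ≤ d) :=
  lens_union_two_small_diameter_sets_general nrm h_add h_smul c₁ c₂ d hd D hD
end

section
/- Let S be the closed unit ball of a norm ‖·‖ on ℝ², let c₁, c₂ ∈ ℝ² with d := ‖c₁ − c₂‖ ≤ 2, and let D := {x ∈ ℝ² : ‖x − c₁‖ ≤ d and ‖x − c₂‖ ≤ d}. For any finite set P ⊆ D, the simple graph G on vertex set P in which distinct x, y ∈ P are adjacent if and only if ‖x − y‖ ≤ 2 (i.e., the intersection graph of the translates {p + S : p ∈ P}) is co-bipartite: its complement graph is bipartite. -/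
/-!
The line through `c₁` and `c₂` cuts the lens `D` into two halves, and each half has diameter at
most `d ≤ 2`, so it spans a clique. For `x`, `y` in one half, ordered so that `c₂`, `x`, `y` turn
counterclockwise around `c₁`, either the segments `[c₁, x]` and `[y, c₂]` cross, and the
quadrilateral inequality gives `‖x - y‖ + d ≤ ‖x - c₁‖ + ‖y - c₂‖ ≤ 2d`, or `x` lies in the
triangle `c₁ y c₂`, which the convex ball of radius `d` around `y` contains.
-/

open Set

def cross (a b : ℝ × ℝ) : ℝ := a.1 * b.2 - a.2 * b.1

/-- Cramer's rule in the plane, written without division. -/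
lemma cross_smul_eq_add (w p q : ℝ × ℝ) : cross w q • p = cross w p • q + cross p q • w := by
  ext <;> simp only [cross, Prod.smul_fst, Prod.smul_snd, Prod.fst_add, Prod.snd_add,
    smul_eq_mul] <;> ring

lemma cross_swap (a b : ℝ × ℝ) : cross b a = -cross a b := by
  simp only [cross]; ring

lemma exists_eq_smul_of_cross_eq_zero {a b : ℝ × ℝ} (ha : a ≠ 0) (h : cross a b = 0) :
    ∃ t : ℝ, b = t • a := by
  set c : ℝ × ℝ := (-a.2, a.1)
  have hc : cross a c ≠ 0 := by
    have hne : a.1 ≠ 0 ∨ a.2 ≠ 0 := by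
      by_contra! h0
      exact ha (Prod.ext h0.1 h0.2)
    have hsq : cross a c = a.1 ^ 2 + a.2 ^ 2 := by simp only [cross, c]; ring
    rw [hsq]
    rcases hne with h1 | h1 <;> positivity
  refine ⟨cross b c / cross a c, ?_⟩
  have hb := cross_smul_eq_add a b c
  rw [h, zero_smul, zero_add] at hb
  rw [div_eq_inv_mul, mul_smul, ← hb, inv_smul_smul₀ hc]

/-- Seen from `a`, the direction of `x` lies between those of `b` and `y`, so the ray from `a`
through `x` meets `[y, b]`: either within `[a, x]`, or beyond `x`, and then `x` lies in the
triangle `a y b`. -/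
lemma exists_mem_segment_inter_or_mem_convexHull {a b x y : ℝ × ℝ}
    (hx : 0 ≤ cross (b - a) (x - a)) (hy : 0 ≤ cross (b - a) (y - a))
    (hxy : 0 ≤ cross (x - a) (y - a))
    (hpos : 0 < cross (b - a) (x - a) + cross (b - a) (y - a)) :
    (∃ z, z ∈ segment ℝ a x ∧ z ∈ segment ℝ y b) ∨ x ∈ convexHull ℝ {a, y, b} := by
  have hcramer := cross_smul_eq_add (b - a) (x - a) (y - a)
  set A := cross (b - a) (x - a)
  set B := cross (b - a) (y - a)
  set C := cross (x - a) (y - a)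
  rcases le_or_gt B (A + C) with hle | hlt
  · have hAC : 0 < A + C := by linarith
    refine .inl ⟨(A / (A + C)) • y + (C / (A + C)) • b, ?_,
      ⟨_, _, by positivity, by positivity, by field_simp, rfl⟩⟩
    rw [segment_eq_image']
    refine ⟨B / (A + C), ⟨by positivity, (div_le_one hAC).2 hle⟩, ?_⟩
    apply smul_right_injective _ hAC.ne'
    simp only [smul_add, smul_smul, mul_div_cancel₀ _ hAC.ne']
    rw [hcramer]
    module
  · have hB : 0 < B := by linarith
    refine .inr <| mem_convexHull_of_exists_fintype ![1 - A / B - C / B, A / B, C / B] ![a, y, b]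
      (fun i => ?_) (by simp [Fin.sum_univ_three]; ring) (fun i => by fin_cases i <;> simp) ?_
    · have : A / B + C / B ≤ 1 := by rw [← add_div, div_le_one hB]; exact hlt.le
      fin_cases i <;> simp <;> first | positivity | linarith
    · simp only [Fin.sum_univ_three]
      apply smul_right_injective _ hB.ne'
      simp only [Fin.isValue, Matrix.cons_val_zero, Matrix.cons_val_one, Matrix.cons_val_two,
        Matrix.head_cons, Matrix.tail_cons, smul_add, smul_smul, mul_sub, mul_one,
        mul_div_cancel₀ _ hB.ne']
      rw [show B • x = B • a + B • (x - a) by module, hcramer]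
      module

namespace Seminorm

variable {E : Type*} [AddCommGroup E] [Module ℝ E] (N : Seminorm ℝ E)

def lens (c₁ c₂ : E) : Set E := N.closedBall c₁ (N (c₁ - c₂)) ∩ N.closedBall c₂ (N (c₁ - c₂))

lemma lens_comm (c₁ c₂ : E) : N.lens c₁ c₂ = N.lens c₂ c₁ := by
  rw [lens, lens, map_sub_rev, inter_comm]

lemma map_sub_le_map_sub_add (a b c : E) : N (a - c) ≤ N (a - b) + N (b - c) := by
  simpa using map_add_le_add N (a - b) (b - c)

lemma map_sub_add_map_sub_of_mem_segment {a b z : E} (hz : z ∈ segment ℝ a b) :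
    N (a - z) + N (z - b) = N (a - b) := by
  obtain ⟨s, t, hs, ht, hst, rfl⟩ := hz
  obtain rfl : s = 1 - t := by linarith
  have h₁ : a - ((1 - t) • a + t • b) = t • (a - b) := by module
  have h₂ : (1 - t) • a + t • b - b = (1 - t) • (a - b) := by module
  rw [h₁, h₂, map_smul_eq_mul, map_smul_eq_mul, Real.norm_of_nonneg ht,
    Real.norm_of_nonneg hs, ← add_mul, add_sub_cancel, one_mul]

/-- The quadrilateral inequality: crossing diagonals are together at least as long as two
opposite sides. -/
lemma map_sub_add_map_sub_le_of_mem_segment {a b x y z : E} (hzx : z ∈ segment ℝ a x)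
    (hzy : z ∈ segment ℝ y b) : N (x - y) + N (a - b) ≤ N (x - a) + N (y - b) := by
  have hx := N.map_sub_add_map_sub_of_mem_segment hzx
  have hy := N.map_sub_add_map_sub_of_mem_segment hzy
  have h₁ := N.map_sub_le_map_sub_add x z y
  have h₂ := N.map_sub_le_map_sub_add a z b
  rw [map_sub_rev N x z, map_sub_rev N z y] at h₁
  rw [map_sub_rev N x a]
  linarith

lemma mem_segment_of_map_sub_le {a b x : E} {l : ℝ} (hl : x - a = l • (b - a))
    (hpos : 0 < N (b - a)) (ha : N (x - a) ≤ N (b - a)) (hb : N (x - b) ≤ N (b - a)) :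
    x ∈ segment ℝ a b := by
  have hl₁ : |l| ≤ 1 := by
    rw [hl, map_smul_eq_mul, Real.norm_eq_abs] at ha
    exact le_of_mul_le_mul_right (by linarith) hpos
  have hl₂ : |l - 1| ≤ 1 := by
    rw [show x - b = (l - 1) • (b - a) by rw [sub_smul, one_smul, ← hl]; abel,
      map_smul_eq_mul, Real.norm_eq_abs] at hb
    exact le_of_mul_le_mul_right (by linarith) hpos
  rw [abs_le] at hl₁ hl₂
  rw [segment_eq_image']
  exact ⟨l, ⟨by linarith, by linarith⟩, show a + l • (b - a) = x by rw [← hl, add_sub_cancel]⟩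

end Seminorm

def leftHalfPlane (c₁ c₂ : ℝ × ℝ) : Set (ℝ × ℝ) := {x | 0 ≤ cross (c₂ - c₁) (x - c₁)}

lemma compl_leftHalfPlane_subset (c₁ c₂ : ℝ × ℝ) :
    (leftHalfPlane c₁ c₂)ᶜ ⊆ leftHalfPlane c₂ c₁ := fun x hx => by
  have hflip : cross (c₁ - c₂) (x - c₂) = -cross (c₂ - c₁) (x - c₁) := by
    simp only [cross, Prod.fst_sub, Prod.snd_sub]; ring
  simp only [leftHalfPlane, mem_compl_iff, mem_ofPred_eq, not_le] at hx ⊢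
  linarith

theorem Seminorm.map_sub_le_of_mem_lens_inter_leftHalfPlane (N : Seminorm ℝ (ℝ × ℝ))
    {c₁ c₂ x y : ℝ × ℝ} (hx : x ∈ N.lens c₁ c₂ ∩ leftHalfPlane c₁ c₂)
    (hy : y ∈ N.lens c₁ c₂ ∩ leftHalfPlane c₁ c₂) : N (x - y) ≤ N (c₁ - c₂) := by
  wlog hxy : 0 ≤ cross (x - c₁) (y - c₁) generalizing x y
  · rw [map_sub_rev]
    exact this hy hx (by rw [cross_swap]; linarith)
  obtain ⟨⟨hx₁, hx₂⟩, hxH : 0 ≤ cross (c₂ - c₁) (x - c₁)⟩ := hx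
  obtain ⟨⟨hy₁, hy₂⟩, hyH : 0 ≤ cross (c₂ - c₁) (y - c₁)⟩ := hy
  rw [mem_closedBall] at hx₁ hx₂ hy₁ hy₂
  rcases (apply_nonneg N (c₁ - c₂)).eq_or_lt with hd | hd
  · have := N.map_sub_le_map_sub_add x c₁ y
    rw [map_sub_rev N c₁ y] at this
    linarith
  have hhull : convexHull ℝ {c₁, y, c₂} ⊆ N.closedBall y (N (c₁ - c₂)) := by
    refine convexHull_min ?_ (N.convex_closedBall _ _)
    simp only [insert_subset_iff, singleton_subset_iff, mem_closedBall, sub_self, map_zero]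
    exact ⟨by rwa [map_sub_rev], hd.le, by rwa [map_sub_rev]⟩
  by_cases hcol : cross (c₂ - c₁) (x - c₁) = 0 ∧ cross (c₂ - c₁) (y - c₁) = 0
  · have hw : c₂ - c₁ ≠ 0 := fun h => by rw [← map_sub_rev, h, map_zero] at hd; exact hd.false
    obtain ⟨l, hl⟩ := exists_eq_smul_of_cross_eq_zero hw hcol.1
    rw [map_sub_rev N c₁ c₂] at hd hx₁ hx₂
    exact hhull (segment_subset_convexHull (by simp) (by simp)
      (N.mem_segment_of_map_sub_le hl hd hx₁ hx₂))
  have hpos : 0 < cross (c₂ - c₁) (x - c₁) + cross (c₂ - c₁) (y - c₁) :=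
    lt_of_le_of_ne (add_nonneg hxH hyH) fun h => hcol ⟨by linarith, by linarith⟩
  rcases exists_mem_segment_inter_or_mem_convexHull hxH hyH hxy hpos with ⟨z, hzx, hzy⟩ | hx
  · have := N.map_sub_add_map_sub_le_of_mem_segment hzx hzy
    linarith
  · exact hhull hx

lemma SimpleGraph.colorable_two_compl_of_isClique {V : Type*} {G : SimpleGraph V} {s : Set V}
    (hs : G.IsClique s) (hsc : G.IsClique sᶜ) : Gᶜ.Colorable 2 := by
  classical
  refine ⟨.mk (fun v => if v ∈ s then 0 else 1) fun {v w} hvw hcol => ?_⟩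
  rw [compl_adj] at hvw
  apply hvw.2
  by_cases hv : v ∈ s <;> by_cases hw : w ∈ s <;> simp [hv, hw] at hcol
  exacts [hs hv hw hvw.1, hsc hv hw hvw.1]

theorem lens_intersection_graph_cobipartite_general
    (nrm : (ℝ × ℝ) → ℝ)
    (h_add : ∀ x y : ℝ × ℝ, nrm (x + y) ≤ nrm x + nrm y)
    (h_smul : ∀ (a : ℝ) (x : ℝ × ℝ), nrm (a • x) = |a| * nrm x)
    (c₁ c₂ : ℝ × ℝ) (d : ℝ) (hd : d = nrm (c₁ - c₂)) (hd2 : d ≤ 2)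
    (D : Set (ℝ × ℝ))
    (hD : D = {x | nrm (x - c₁) ≤ d ∧ nrm (x - c₂) ≤ d})
    (P : Finset (ℝ × ℝ)) (hP : ∀ p ∈ P, p ∈ D)
    (G : SimpleGraph {x // x ∈ P})
    (hG : ∀ x y : {x // x ∈ P},
      G.Adj x y ↔ x ≠ y ∧ nrm ((x : ℝ × ℝ) - (y : ℝ × ℝ)) ≤ 2) :
    Gᶜ.Colorable 2 := by
  subst hD hd
  let N : Seminorm ℝ (ℝ × ℝ) := .of nrm h_add fun a x => by rw [h_smul, Real.norm_eq_abs]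
  have hlens : ∀ v : {x // x ∈ P}, (v : ℝ × ℝ) ∈ N.lens c₁ c₂ := fun v => hP v v.2
  have hclique : ∀ a b, N (a - b) = N (c₁ - c₂) → ∀ s : Set {x // x ∈ P},
      (∀ v ∈ s, (v : ℝ × ℝ) ∈ N.lens a b ∩ leftHalfPlane a b) → G.IsClique s :=
    fun a b hab s hs x hx y hy hne => (hG x y).2
      ⟨hne, (hab ▸ N.map_sub_le_of_mem_lens_inter_leftHalfPlane (hs x hx) (hs y hy)).trans hd2⟩
  exact SimpleGraph.colorable_two_compl_of_isClique (s := {v | (v : ℝ × ℝ) ∈ leftHalfPlane c₁ c₂})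
    (hclique c₁ c₂ rfl _ fun v hv => ⟨hlens v, hv⟩)
    (hclique c₂ c₁ (map_sub_rev N _ _) _ fun v hv =>
      ⟨N.lens_comm c₁ c₂ ▸ hlens v, compl_leftHalfPlane_subset c₁ c₂ hv⟩)

/-- For a finite set of points `P` inside the lens `D` (with `d = ‖c₁ - c₂‖ ≤ 2`),
the graph on `P` joining distinct points at norm-distance at most `2` — i.e. the
intersection graph of the unit-ball translates centered at `P` — is co-bipartite:
its complement is bipartite (2-colorable). -/
theorem lens_intersection_graph_cobipartite
    (nrm : (ℝ × ℝ) → ℝ)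
    (h_add : ∀ x y : ℝ × ℝ, nrm (x + y) ≤ nrm x + nrm y)
    (h_smul : ∀ (a : ℝ) (x : ℝ × ℝ), nrm (a • x) = |a| * nrm x)
    (h_def : ∀ x : ℝ × ℝ, nrm x = 0 ↔ x = 0)
    (c₁ c₂ : ℝ × ℝ) (d : ℝ) (hd : d = nrm (c₁ - c₂)) (hd2 : d ≤ 2)
    (D : Set (ℝ × ℝ))
    (hD : D = {x | nrm (x - c₁) ≤ d ∧ nrm (x - c₂) ≤ d})
    (P : Finset (ℝ × ℝ)) (hP : ∀ p ∈ P, p ∈ D)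
    (G : SimpleGraph {x // x ∈ P})
    (hG : ∀ x y : {x // x ∈ P},
      G.Adj x y ↔ x ≠ y ∧ nrm ((x : ℝ × ℝ) - (y : ℝ × ℝ)) ≤ 2) :
    Gᶜ.Colorable 2 :=
  lens_intersection_graph_cobipartite_general nrm h_add h_smul c₁ c₂ d hd hd2 D hD P hP G hG
end

section
/- Let ‖·‖ be a norm on ℝ² (more generally, on any real normed vector space). If a point c lies both on the line segment joining c₁ and c₃ and on the line segment joining c₂ and c₄, then ‖c₁ − c₂‖ + ‖c₃ − c₄‖ ≤ ‖c₁ − c₃‖ + ‖c₂ − c₄‖. -/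
/-- If the segments `[c₁, c₃]` and `[c₂, c₄]` share a point, then
`‖c₁ - c₂‖ + ‖c₃ - c₄‖ ≤ ‖c₁ - c₃‖ + ‖c₂ - c₄‖`. -/
theorem crossing_diagonals_ineq
    (nrm : (ℝ × ℝ) → ℝ)
    (h_add : ∀ x y : ℝ × ℝ, nrm (x + y) ≤ nrm x + nrm y)
    (h_smul : ∀ (a : ℝ) (x : ℝ × ℝ), nrm (a • x) = |a| * nrm x)
    (h_def : ∀ x : ℝ × ℝ, nrm x = 0 ↔ x = 0)
    (c₁ c₂ c₃ c₄ c : ℝ × ℝ)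
    (hc₁₃ : c ∈ segment ℝ c₁ c₃) (hc₂₄ : c ∈ segment ℝ c₂ c₄) :
    nrm (c₁ - c₂) + nrm (c₃ - c₄) ≤ nrm (c₁ - c₃) + nrm (c₂ - c₄) := by
  obtain ⟨a, b, ha, hb, hab, hc⟩ := hc₁₃
  obtain ⟨a', b', ha', hb', hab', hc'⟩ := hc₂₄
  have hsym : ∀ x y : ℝ × ℝ, nrm (x - y) = nrm (y - x) := by
    intro x y
    have : x - y = (-1 : ℝ) • (y - x) := by module
    rw [this, h_smul]
    norm_num
  have h : a • c₁ + b • c₃ = a' • c₂ + b' • c₄ := by rw [hc, hc']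
  have e1 : c₁ - c₂ = b • (c₁ - c₃) + b' • (c₄ - c₂) := by
    have ha1 : a = 1 - b := by linarith
    have ha2 : a' = 1 - b' := by linarith
    rw [ha1, ha2] at h
    linear_combination (norm := module) h
  have e2 : c₃ - c₄ = a • (c₃ - c₁) + a' • (c₂ - c₄) := by
    have hb1 : b = 1 - a := by linarith
    have hb2 : b' = 1 - a' := by linarith
    rw [hb1, hb2] at h
    linear_combination (norm := module) h
  have n1 : nrm (c₁ - c₂) ≤ b * nrm (c₁ - c₃) + b' * nrm (c₂ - c₄) := by
    calc nrm (c₁ - c₂) ≤ nrm (b • (c₁ - c₃)) + nrm (b' • (c₄ - c₂)) := by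
          rw [e1]; exact h_add _ _
      _ = b * nrm (c₁ - c₃) + b' * nrm (c₂ - c₄) := by
          rw [h_smul, h_smul, abs_of_nonneg hb, abs_of_nonneg hb', hsym c₄ c₂]
  have n2 : nrm (c₃ - c₄) ≤ a * nrm (c₁ - c₃) + a' * nrm (c₂ - c₄) := by
    calc nrm (c₃ - c₄) ≤ nrm (a • (c₃ - c₁)) + nrm (a' • (c₂ - c₄)) := by
          rw [e2]; exact h_add _ _
      _ = a * nrm (c₁ - c₃) + a' * nrm (c₂ - c₄) := by
          rw [h_smul, h_smul, abs_of_nonneg ha, abs_of_nonneg ha', hsym c₃ c₁]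
  have hx : a * nrm (c₁ - c₃) + b * nrm (c₁ - c₃) = nrm (c₁ - c₃) := by
    rw [← add_mul, hab, one_mul]
  have hy : a' * nrm (c₂ - c₄) + b' * nrm (c₂ - c₄) = nrm (c₂ - c₄) := by
    rw [← add_mul, hab', one_mul]
  linarith
end

section
/- Let S be the closed unit ball of a norm ‖·‖ on ℝ². Let c₁, c₂, c₃, c₄ ∈ ℝ² be points such that the segments [c₁, c₃] and [c₂, c₄] have a common point (the four centers are in convex position in the cyclic order c₁, c₂, c₃, c₄), and let λ₁, λ₂, λ₃, λ₄ > 0. If the homothets c₁ + λ₁S and c₃ + λ₃S intersect, and the homothets c₂ + λ₂S and c₄ + λ₄S intersect, then it is impossible that both c₁ + λ₁S is disjoint from c₂ + λ₂S and c₃ + λ₃S is disjoint from c₄ + λ₄S. Consequently, in any representation of K₂,₂ by four homothets of S whose centers are in convex position, the two non-edges are between homothets at opposite corners of the quadrangle. -/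
/-- In a representation of `K₂,₂` by four homothets of the unit ball `S` of a norm,
with centers in convex position in the cyclic order `c₁, c₂, c₃, c₄` (the diagonals
`[c₁,c₃]` and `[c₂,c₄]` cross): if the homothets at opposite corners `c₁, c₃`
intersect and those at `c₂, c₄` intersect, then the homothets at `c₁, c₂` and the
ones at `c₃, c₄` cannot both be disjoint.  Hence the two non-edges are between
opposite corners of the quadrangle. -/
theorem K22_nonedges_opposite
    (nrm : (ℝ × ℝ) → ℝ)
    (h_add : ∀ x y : ℝ × ℝ, nrm (x + y) ≤ nrm x + nrm y)
    (h_smul : ∀ (a : ℝ) (x : ℝ × ℝ), nrm (a • x) = |a| * nrm x)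
    (h_def : ∀ x : ℝ × ℝ, nrm x = 0 ↔ x = 0)
    (S : Set (ℝ × ℝ)) (hS : S = {x | nrm x ≤ 1})
    (c₁ c₂ c₃ c₄ : ℝ × ℝ) (l₁ l₂ l₃ l₄ : ℝ)
    (hl₁ : 0 < l₁) (hl₂ : 0 < l₂) (hl₃ : 0 < l₃) (hl₄ : 0 < l₄)
    (hconv : (segment ℝ c₁ c₃ ∩ segment ℝ c₂ c₄).Nonempty)
    (h13 : (((fun s => c₁ + l₁ • s) '' S) ∩ ((fun s => c₃ + l₃ • s) '' S)).Nonempty)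
    (h24 : (((fun s => c₂ + l₂ • s) '' S) ∩ ((fun s => c₄ + l₄ • s) '' S)).Nonempty) :
    ¬ ((((fun s => c₁ + l₁ • s) '' S) ∩ ((fun s => c₂ + l₂ • s) '' S) = ∅) ∧
       (((fun s => c₃ + l₃ • s) '' S) ∩ ((fun s => c₄ + l₄ • s) '' S) = ∅)) := by
  rintro ⟨h12, h34⟩
  have hneg : ∀ x : ℝ × ℝ, nrm (-x) = nrm x := by
    intro x
    have := h_smul (-1) x
    simpa using this
  -- intersection implies distance bound
  have key : ∀ (c c' : ℝ × ℝ) (l l' : ℝ), 0 < l → 0 < l' →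
      (((fun s => c + l • s) '' S) ∩ ((fun s => c' + l' • s) '' S)).Nonempty →
      nrm (c - c') ≤ l + l' := by
    rintro c c' l l' hl hl' ⟨x, ⟨s, hs, hx⟩, ⟨t, ht, hx'⟩⟩
    rw [hS] at hs ht
    simp only [Set.mem_setOf_eq] at hs ht
    have hd : c - c' = l' • t + -(l • s) := by
      have h : c + l • s = c' + l' • t := hx.trans hx'.symm
      have h' : c - c' = l' • t - l • s := by
        rw [sub_eq_sub_iff_add_eq_add, h, add_comm]
      rw [h']; abel
    calc nrm (c - c') ≤ nrm (l' • t) + nrm (-(l • s)) := hd ▸ h_add _ _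
      _ = |l'| * nrm t + |l| * nrm s := by rw [hneg, h_smul, h_smul]
      _ = l' * nrm t + l * nrm s := by
          rw [abs_of_pos hl, abs_of_pos hl']
      _ ≤ l' * 1 + l * 1 := by
          gcongr
      _ = l + l' := by ring
  -- distance bound implies intersection
  have key2 : ∀ (c c' : ℝ × ℝ) (l l' : ℝ), 0 < l → 0 < l' →
      nrm (c - c') ≤ l + l' →
      (((fun s => c + l • s) '' S) ∩ ((fun s => c' + l' • s) '' S)).Nonempty := by
    intro c c' l l' hl hl' hd
    have hll : 0 < l + l' := add_pos hl hl'
    set u : ℝ × ℝ := (l + l')⁻¹ • (c' - c) with hu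
    have hnu : nrm u ≤ 1 := by
      rw [hu, h_smul, abs_of_pos (inv_pos.mpr hll)]
      have hsym : nrm (c' - c) = nrm (c - c') := by
        rw [← hneg (c - c')]; congr 1; abel
      rw [hsym]
      calc (l + l')⁻¹ * nrm (c - c') ≤ (l + l')⁻¹ * (l + l') := by
            gcongr
        _ = 1 := inv_mul_cancel₀ hll.ne'
    have hnu' : nrm (-u) ≤ 1 := by rwa [hneg]
    have h1 : (l + l') • u = c' - c := by
      rw [hu, smul_smul, mul_inv_cancel₀ hll.ne', one_smul]
    refine ⟨c + l • u, ⟨u, by rw [hS]; exact hnu, rfl⟩, ⟨-u, by rw [hS]; exact hnu', ?_⟩⟩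
    show c' + l' • (-u) = c + l • u
    rw [add_smul] at h1
    rw [smul_neg]
    have h2 : c' = l • u + l' • u + c := by
      have h3 := h1.symm
      rw [eq_comm, sub_eq_iff_eq_add] at h1
      exact h1
    rw [h2]; abel
  have d13 : nrm (c₁ - c₃) ≤ l₁ + l₃ := key c₁ c₃ l₁ l₃ hl₁ hl₃ h13
  have d24 : nrm (c₂ - c₄) ≤ l₂ + l₄ := key c₂ c₄ l₂ l₄ hl₂ hl₄ h24
  have d12 : l₁ + l₂ < nrm (c₁ - c₂) := by
    by_contra h
    push_neg at h
    exact (key2 c₁ c₂ l₁ l₂ hl₁ hl₂ h).ne_empty h12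
  have d34 : l₃ + l₄ < nrm (c₃ - c₄) := by
    by_contra h
    push_neg at h
    exact (key2 c₃ c₄ l₃ l₄ hl₃ hl₄ h).ne_empty h34
  obtain ⟨p, hp13, hp24⟩ := hconv
  obtain ⟨a, b, ha, hb, hab, hp⟩ := hp13
  obtain ⟨a', b', ha', hb', hab', hp'⟩ := hp24
  have ha1 : a = 1 - b := by linarith
  have ha1' : a' = 1 - b' := by linarith
  have e1 : nrm (c₁ - p) + nrm (p - c₃) = nrm (c₁ - c₃) := by
    have h1 : c₁ - p = b • (c₁ - c₃) := by rw [← hp, ha1]; module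
    have h2 : p - c₃ = a • (c₁ - c₃) := by rw [← hp, ha1]; module
    rw [h1, h2, h_smul, h_smul, abs_of_nonneg ha, abs_of_nonneg hb]
    ring_nf
    linear_combination (nrm (c₁ - c₃)) * hab
  have e2 : nrm (c₂ - p) + nrm (p - c₄) = nrm (c₂ - c₄) := by
    have h1 : c₂ - p = b' • (c₂ - c₄) := by rw [← hp', ha1']; module
    have h2 : p - c₄ = a' • (c₂ - c₄) := by rw [← hp', ha1']; module
    rw [h1, h2, h_smul, h_smul, abs_of_nonneg ha', abs_of_nonneg hb']
    linear_combination (nrm (c₂ - c₄)) * hab'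
  have t1 : nrm (c₁ - c₂) ≤ nrm (c₁ - p) + nrm (p - c₂) := by
    have : c₁ - c₂ = (c₁ - p) + (p - c₂) := by abel
    rw [this]; exact h_add _ _
  have t2 : nrm (c₃ - c₄) ≤ nrm (p - c₃) + nrm (p - c₄) := by
    have h0 : c₃ - c₄ = (c₃ - p) + (p - c₄) := by abel
    have h1 : nrm (c₃ - p) = nrm (p - c₃) := by
      rw [← hneg (p - c₃)]; congr 1; abel
    calc nrm (c₃ - c₄) ≤ nrm (c₃ - p) + nrm (p - c₄) := h0 ▸ h_add _ _
      _ = nrm (p - c₃) + nrm (p - c₄) := by rw [h1]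
  have t3 : nrm (p - c₂) = nrm (c₂ - p) := by
    rw [← hneg (c₂ - p)]; congr 1; abel
  linarith
end

section
/- For every positive integer n, there exist closed half-planes H₁, …, Hₙ and H′₁, …, H′ₙ in ℝ² such that Hᵢ ∩ H′ᵢ = ∅ for every i ∈ {1,…,n}, while every other pair among these 2n half-planes has nonempty intersection. Consequently, the complement of a perfect matching on 2n vertices (an antimatching of arbitrary size) is the intersection graph of a family of closed half-planes. -/
/-!
Take `H_c = {x + c y ≤ 0}` and `H'_c = {x + c y ≥ 1}` for `n` distinct slopes `c`.
The parallel half-planes `H_c` and `H'_c` are separated by a strip, every `H_c` contains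
`(-1, 0)`, every `H'_c` contains `(1, 0)`, and for `c ≠ d` the lines `x + c y = 0` and
`x + d y = 1` meet, so `H_c ∩ H'_d` is nonempty.
-/

noncomputable def fstAddSmulSnd (c : ℝ) : (ℝ × ℝ) →ₗ[ℝ] ℝ :=
  LinearMap.fst ℝ ℝ ℝ + c • LinearMap.snd ℝ ℝ ℝ

@[simp]
lemma fstAddSmulSnd_apply (c : ℝ) (p : ℝ × ℝ) : fstAddSmulSnd c p = p.1 + c * p.2 := rfl

lemma fstAddSmulSnd_ne_zero (c : ℝ) : fstAddSmulSnd c ≠ 0 := fun h => by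
  simpa using LinearMap.congr_fun h (1, 0)

lemma exists_fstAddSmulSnd_eq_zero_eq_one {c d : ℝ} (hcd : c ≠ d) :
    ∃ p, fstAddSmulSnd c p = 0 ∧ fstAddSmulSnd d p = 1 := by
  have hdc : d - c ≠ 0 := sub_ne_zero.mpr hcd.symm
  refine ⟨(-c / (d - c), 1 / (d - c)), ?_, ?_⟩ <;> simp only [fstAddSmulSnd_apply] <;>
    field_simp <;> ring

theorem antimatching_halfplanes_general (n : ℕ) :
    ∃ H H' : Fin n → Set (ℝ × ℝ),
      (∀ i, ∃ (f : (ℝ × ℝ) →ₗ[ℝ] ℝ) (a : ℝ), f ≠ 0 ∧ H i = {x | f x ≤ a}) ∧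
      (∀ i, ∃ (f : (ℝ × ℝ) →ₗ[ℝ] ℝ) (a : ℝ), f ≠ 0 ∧ H' i = {x | f x ≤ a}) ∧
      (∀ i, H i ∩ H' i = ∅) ∧
      (∀ i j, i ≠ j → (H i ∩ H j).Nonempty) ∧
      (∀ i j, i ≠ j → (H' i ∩ H' j).Nonempty) ∧
      (∀ i j, i ≠ j → (H i ∩ H' j).Nonempty) := by
  let f : Fin n → (ℝ × ℝ) →ₗ[ℝ] ℝ := fun i => fstAddSmulSnd i
  refine ⟨fun i => {x | f i x ≤ 0}, fun i => {x | (-f i) x ≤ -1},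
    fun i => ⟨f i, 0, fstAddSmulSnd_ne_zero _, rfl⟩,
    fun i => ⟨-f i, -1, neg_ne_zero.mpr (fstAddSmulSnd_ne_zero _), rfl⟩, ?_,
    fun i j _ => ⟨(-1, 0), by simp [f], by simp [f]⟩,
    fun i j _ => ⟨(1, 0), by simp [f], by simp [f]⟩, ?_⟩
  · exact fun i => Set.eq_empty_of_forall_notMem
      fun x ⟨(hx : f i x ≤ 0), (hx' : -f i x ≤ -1)⟩ => by linarith
  · intro i j hij
    have hcd : (i : ℝ) ≠ j := by exact_mod_cast Fin.val_injective.ne hij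
    obtain ⟨p, hp, hp'⟩ := exists_fstAddSmulSnd_eq_zero_eq_one hcd
    exact ⟨p, hp.le, show -f j p ≤ -1 from neg_le_neg hp'.ge⟩

/-- For every `n ≥ 1` there are closed half-planes `H₁, …, Hₙ, H′₁, …, H′ₙ` in `ℝ²`
with `Hᵢ ∩ H′ᵢ = ∅` for every `i`, while every other pair among these `2n`
half-planes intersects.  Hence the complement of a perfect matching on `2n`
vertices is an intersection graph of closed half-planes. -/
theorem antimatching_halfplanes (n : ℕ) (hn : 0 < n) :
    ∃ H H' : Fin n → Set (ℝ × ℝ),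
      (∀ i, ∃ (f : (ℝ × ℝ) →ₗ[ℝ] ℝ) (a : ℝ), f ≠ 0 ∧ H i = {x | f x ≤ a}) ∧
      (∀ i, ∃ (f : (ℝ × ℝ) →ₗ[ℝ] ℝ) (a : ℝ), f ≠ 0 ∧ H' i = {x | f x ≤ a}) ∧
      (∀ i, H i ∩ H' i = ∅) ∧
      (∀ i j, i ≠ j → (H i ∩ H j).Nonempty) ∧
      (∀ i j, i ≠ j → (H' i ∩ H' j).Nonempty) ∧
      (∀ i j, i ≠ j → (H i ∩ H' j).Nonempty) :=
  antimatching_halfplanes_general n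
end

section
/- Let B₁, …, Bₙ be nonempty axis-parallel closed rectangles in the plane, Bᵢ = [aᵢ, bᵢ] × [cᵢ, dᵢ]. Then every maximal pairwise-intersecting subfamily K ⊆ {1, …, n} is exactly the set {i : p ∈ Bᵢ} of rectangles containing the point p := (maxᵢ∈K aᵢ, maxᵢ∈K cᵢ); consequently, the number of maximal pairwise-intersecting subfamilies (maximal cliques of the intersection graph) is at most n². -/
/-- Every maximal pairwise-intersecting subfamily `K` of a family of axis-parallel
closed rectangles `Bᵢ = [aᵢ,bᵢ] × [cᵢ,dᵢ]` is exactly the set of rectangles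
containing the point `p = (maxᵢ∈K aᵢ, maxᵢ∈K cᵢ)`; consequently the number of
maximal pairwise-intersecting subfamilies (maximal cliques of the intersection
graph) is at most `n²`. -/
theorem rectangles_maximal_cliques (n : ℕ) (hn : 0 < n)
    (a b c d : Fin n → ℝ)
    (hab : ∀ i, a i ≤ b i) (hcd : ∀ i, c i ≤ d i)
    (B : Fin n → Set (ℝ × ℝ))
    (hB : ∀ i, B i = Set.Icc (a i) (b i) ×ˢ Set.Icc (c i) (d i))
    (M : Finset (Fin n) → Prop)
    (hM : ∀ K, M K ↔
      ((∀ i ∈ K, ∀ j ∈ K, (B i ∩ B j).Nonempty) ∧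
        ∀ K' : Finset (Fin n), K ⊆ K' →
          (∀ i ∈ K', ∀ j ∈ K', (B i ∩ B j).Nonempty) → K' = K)) :
    (∀ K, M K → ∀ i, i ∈ K ↔ (sSup (a '' ↑K), sSup (c '' ↑K)) ∈ B i) ∧
      {K | M K}.ncard ≤ n ^ 2 := by
  -- every maximal clique is nonempty
  have hne : ∀ K, M K → K.Nonempty := by
    intro K hK
    obtain ⟨hcl, hmax⟩ := (hM K).1 hK
    by_contra h
    rw [Finset.not_nonempty_iff_eq_empty] at h
    subst h
    set i0 : Fin n := ⟨0, hn⟩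
    have hcl' : ∀ i ∈ ({i0} : Finset (Fin n)), ∀ j ∈ ({i0} : Finset (Fin n)),
        (B i ∩ B j).Nonempty := by
      intro i hi j hj
      simp only [Finset.mem_singleton] at hi hj
      subst hi; subst hj
      refine ⟨(a i0, c i0), ?_, ?_⟩ <;>
        · rw [hB]
          exact ⟨⟨le_refl _, hab i0⟩, ⟨le_refl _, hcd i0⟩⟩
    have := hmax {i0} (Finset.empty_subset _) hcl'
    simp at this
  -- the sups are attained
  have hmem : ∀ K : Finset (Fin n), K.Nonempty →
      sSup (a '' ↑K) ∈ a '' (↑K : Set (Fin n)) ∧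
      sSup (c '' ↑K) ∈ c '' (↑K : Set (Fin n)) := by
    intro K hK
    constructor <;>
      exact Set.Nonempty.csSup_mem (hK.to_set.image _) (K.finite_toSet.image _)
  have hub : ∀ (f : Fin n → ℝ) (K : Finset (Fin n)), ∀ j ∈ K,
      f j ≤ sSup (f '' ↑K) := by
    intro f K j hj
    exact le_csSup ((K.finite_toSet.image f).bddAbove) ⟨j, hj, rfl⟩
  -- the key point lies in every box of the clique
  have pin : ∀ K, M K → ∀ j ∈ K, (sSup (a '' ↑K), sSup (c '' ↑K)) ∈ B j := by
    intro K hK j hj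
    obtain ⟨hcl, hmax⟩ := (hM K).1 hK
    obtain ⟨⟨i0, hi0K, hi0⟩, ⟨i1, hi1K, hi1⟩⟩ := hmem K (hne K hK)
    rw [hB]
    refine ⟨⟨hub a K j hj, ?_⟩, ⟨hub c K j hj, ?_⟩⟩
    · obtain ⟨q, hq0, hq1⟩ := hcl i0 hi0K j hj
      rw [hB] at hq0 hq1
      rw [← hi0]
      exact le_trans hq0.1.1 hq1.1.2
    · obtain ⟨q, hq0, hq1⟩ := hcl i1 hi1K j hj
      rw [hB] at hq0 hq1
      rw [← hi1]
      exact le_trans hq0.2.1 hq1.2.2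
  have main : ∀ K, M K → ∀ i, i ∈ K ↔ (sSup (a '' ↑K), sSup (c '' ↑K)) ∈ B i := by
    intro K hK i
    obtain ⟨hcl, hmax⟩ := (hM K).1 hK
    constructor
    · exact pin K hK i
    · intro hp
      have hcl' : ∀ j ∈ insert i K, ∀ k ∈ insert i K, (B j ∩ B k).Nonempty := by
        intro j hj k hk
        refine ⟨(sSup (a '' ↑K), sSup (c '' ↑K)), ?_, ?_⟩ <;>
          · first
            | (rcases Finset.mem_insert.1 hj with h | h;
               · subst h; exact hp
               · exact pin K hK _ h)
            | (rcases Finset.mem_insert.1 hk with h | h;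
               · subst h; exact hp
               · exact pin K hK _ h)
      have := hmax (insert i K) (Finset.subset_insert _ _) hcl'
      rw [← this]
      exact Finset.mem_insert_self i K
  refine ⟨main, ?_⟩
  set g : Finset (Fin n) → ℝ × ℝ := fun K => (sSup (a '' ↑K), sSup (c '' ↑K)) with hg
  set t : Set (ℝ × ℝ) := (fun ij : Fin n × Fin n => (a ij.1, c ij.2)) '' Set.univ with htdef
  have ht : t.Finite := Set.toFinite _
  have hsub : ∀ K ∈ {K | M K}, g K ∈ t := by
    intro K hK
    obtain ⟨⟨i0, _, hi0⟩, ⟨i1, _, hi1⟩⟩ := hmem K (hne K hK)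
    exact ⟨(i0, i1), Set.mem_univ _, by simp [hg, hi0, hi1]⟩
  have hinj : Set.InjOn g {K | M K} := by
    intro K hK K' hK' h
    ext i
    rw [main K hK i, main K' hK' i]
    simp only [hg] at h
    rw [h]
  calc {K | M K}.ncard ≤ t.ncard :=
        Set.ncard_le_ncard_of_injOn g hsub hinj ht
    _ ≤ (Set.univ : Set (Fin n × Fin n)).ncard := Set.ncard_image_le Set.finite_univ
    _ = n ^ 2 := by simp [Set.ncard_univ, sq]
end
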